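/- arXiv:1409.6422 — 7 statements merged into one kernel-verified Lean document; each statement's English description precedes it below -/
import Mathlib

section
/- Let f be an orientation-preserving homeomorphism of the circle with lift F : ℝ → ℝ, and let μ be an f-invariant Borel probability measure on the circle. Then the translation number of F equals the integral over the circle of the displacement function x ↦ F(x̃) − x̃ (where x̃ is a lift of x; the displacement descends to a well-defined function on the circle). -/
/-!
The Birkhoff sums of the displacement `φ` along `f` telescope: at a point `x̃` they equal
`Fⁿ(x̃) - x̃`. Since `Fⁿ` is monotone and commutes with `x ↦ x + 1`, this differs from `Fⁿ(0)`
by at most `1` for `x̃ ∈ [0, 1)`, uniformly in `n`. Integrating against the invariant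
probability measure `μ` turns the Birkhoff sum into `n ∫ φ dμ`, so `|Fⁿ(0) - n ∫ φ dμ| ≤ 1`
and dividing by `n` gives the limit.
-/

open MeasureTheory Filter Topology Function

theorem MeasureTheory.MeasurePreserving.integrable_birkhoffSum {α E : Type*}
    [MeasurableSpace α] [NormedAddCommGroup E] {μ : Measure α} {f : α → α}
    (hf : MeasurePreserving f μ μ) {g : α → E} (hg : Integrable g μ) (n : ℕ) :
    Integrable (birkhoffSum f g n) μ :=
  integrable_finsetSum _ fun k _ => (hf.iterate k).integrable_comp_of_integrable hg

theorem MeasureTheory.MeasurePreserving.integral_birkhoffSum {α E : Type*} [MeasurableSpace α]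
    [NormedAddCommGroup E] [NormedSpace ℝ E] {μ : Measure α} {f : α → α}
    (hf : MeasurePreserving f μ μ) {g : α → E} (hg : Integrable g μ) (n : ℕ) :
    ∫ x, birkhoffSum f g n x ∂μ = n • ∫ x, g x ∂μ := by
  have hint_comp (k : ℕ) : ∫ x, g (f^[k] x) ∂μ = ∫ x, g x ∂μ := by
    have hk := hf.iterate k
    rw [← integral_map hk.aemeasurable (by rw [hk.map_eq]; exact hg.1), hk.map_eq]
  simp only [birkhoffSum]
  rw [integral_finsetSum (f := fun k x => g (f^[k] x)) _
    fun k _ => (hf.iterate k).integrable_comp_of_integrable hg]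
  simp only [hint_comp, Finset.sum_const, Finset.card_range]

theorem birkhoffSum_semiconj_eq_iterate_sub {α G : Type*} [AddCommGroup G] {f : α → α}
    {F : G → G} {π : G → α} (hπ : Semiconj π F f) {φ : α → G} (hφ : ∀ x, φ (π x) = F x - x)
    (n : ℕ) (x : G) : birkhoffSum f φ n (π x) = F^[n] x - x := by
  induction n generalizing x with
  | zero => simp
  | succ n ih =>
    rw [birkhoffSum_succ', ← hπ x, ih, hφ, iterate_succ_apply]
    abel

theorem abs_iterate_sub_sub_iterate_zero_le {F : ℝ → ℝ} (hF : Monotone F)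
    (hF1 : ∀ x, F (x + 1) = F x + 1) (n : ℕ) {x : ℝ} (hx : x ∈ Set.Icc (0 : ℝ) 1) :
    |F^[n] x - x - F^[n] 0| ≤ 1 := by
  have hcomm : Function.Commute F (· + 1) := hF1
  have h0 : F^[n] 0 ≤ F^[n] x := hF.iterate n hx.1
  have hshift : F^[n] 1 = F^[n] 0 + 1 := by simpa using hcomm.iterate_left n 0
  have h1 : F^[n] x ≤ F^[n] 0 + 1 := hshift ▸ hF.iterate n hx.2
  rw [abs_le]
  constructor <;> linarith [hx.1, hx.2]

theorem tendsto_div_natCast_of_abs_sub_mul_le {a : ℕ → ℝ} {I C : ℝ}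
    (h : ∀ n : ℕ, |a n - n * I| ≤ C) : Tendsto (fun n : ℕ => a n / n) atTop (𝓝 I) := by
  have herr : Tendsto (fun n : ℕ => (a n - n * I) / n) atTop (𝓝 0) := by
    refine squeeze_zero_norm (fun n => ?_) (tendsto_const_div_atTop_nhds_zero_nat C)
    rw [norm_div, Real.norm_natCast]
    exact div_le_div_of_nonneg_right (h n) n.cast_nonneg
  refine (by simpa using herr.add_const I : Tendsto _ _ (𝓝 I)).congr' ?_
  filter_upwards [eventually_ne_atTop 0] with n hn
  field_simp
  ring

theorem translation_number_eq_integral_displacement_general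
    (F : ℝ → ℝ) (hFc : Continuous F) (hFm : StrictMono F)
    (hFper : ∀ x : ℝ, F (x + 1) = F x + 1)
    (f : AddCircle (1 : ℝ) → AddCircle (1 : ℝ))
    (hlift : ∀ x : ℝ, f (x : AddCircle (1 : ℝ)) = ((F x : ℝ) : AddCircle (1 : ℝ)))
    (μ : Measure (AddCircle (1 : ℝ))) [IsProbabilityMeasure μ]
    (hinv : Measure.map f μ = μ)
    (φ : AddCircle (1 : ℝ) → ℝ)
    (hφ : ∀ x : ℝ, φ (x : AddCircle (1 : ℝ)) = F x - x) :
    Tendsto (fun n : ℕ => F^[n] 0 / (n : ℝ)) atTop (𝓝 (∫ x, φ x ∂μ)) := by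
  have hquot := QuotientAddGroup.isQuotientMap_mk (AddSubgroup.zmultiples (1 : ℝ))
  have hfc : Continuous f := hquot.continuous_iff.2 <| by
    simpa only [comp_def, hlift] using hquot.continuous.comp hFc
  have hφc : Continuous φ := hquot.continuous_iff.2 <| by
    simp only [comp_def, hφ]
    fun_prop
  have hf : MeasurePreserving f μ μ := ⟨hfc.measurable, hinv⟩
  have hφi : Integrable φ μ := hφc.integrable_of_hasCompactSupport (.of_compactSpace _)
  refine tendsto_div_natCast_of_abs_sub_mul_le (C := 1) fun n => ?_
  have hbound (z : AddCircle (1 : ℝ)) : ‖birkhoffSum f φ n z - F^[n] 0‖ ≤ 1 := by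
    obtain ⟨x, hx, rfl⟩ := AddCircle.eq_coe_Ico z
    rw [birkhoffSum_semiconj_eq_iterate_sub (fun x => (hlift x).symm) hφ, Real.norm_eq_abs]
    exact abs_iterate_sub_sub_iterate_zero_le hFm.monotone hFper n (Set.Ico_subset_Icc_self hx)
  calc |F^[n] 0 - n * ∫ x, φ x ∂μ| = ‖∫ z, (birkhoffSum f φ n z - F^[n] 0) ∂μ‖ := by
        rw [integral_sub (hf.integrable_birkhoffSum hφi n) (integrable_const _),
          hf.integral_birkhoffSum hφi n, integral_const, probReal_univ, Real.norm_eq_abs,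
          abs_sub_comm, nsmul_eq_mul, one_smul]
    _ ≤ 1 := by simpa using norm_integral_le_of_norm_le_const (μ := μ) (.of_forall hbound)

/-- For an orientation-preserving circle homeomorphism `f` with lift
`F : ℝ → ℝ` and an `f`-invariant Borel probability measure `μ` on the circle
`ℝ/ℤ = AddCircle 1`, the translation number `τ(F) = lim Fⁿ(0)/n` equals the
integral over the circle of the displacement function `x ↦ F x̃ - x̃`. -/
theorem translation_number_eq_integral_displacement
    (F : ℝ → ℝ) (hFc : Continuous F) (hFm : StrictMono F)
    (hFsurj : Function.Surjective F)
    (hFper : ∀ x : ℝ, F (x + 1) = F x + 1)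
    (f : AddCircle (1 : ℝ) → AddCircle (1 : ℝ))
    (hlift : ∀ x : ℝ, f (x : AddCircle (1 : ℝ)) = ((F x : ℝ) : AddCircle (1 : ℝ)))
    (μ : Measure (AddCircle (1 : ℝ))) [IsProbabilityMeasure μ]
    (hinv : Measure.map f μ = μ)
    (φ : AddCircle (1 : ℝ) → ℝ)
    (hφ : ∀ x : ℝ, φ (x : AddCircle (1 : ℝ)) = F x - x) :
    Tendsto (fun n : ℕ => F^[n] 0 / (n : ℝ)) atTop (𝓝 (∫ x, φ x ∂μ)) :=
  translation_number_eq_integral_displacement_general F hFc hFm hFper f hlift μ hinv φ hφ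
end

section
/- Let μ be a Borel probability measure on the circle, and let F, G : ℝ → ℝ be lifts of orientation-preserving circle homeomorphisms f, g both of which preserve μ. Then the translation number of the composition F ∘ G equals τ(F) + τ(G); that is, translation number is a group homomorphism on the group of lifts of μ-preserving orientation-preserving circle homeomorphisms. -/
/-!
The displacement `x ↦ f x - x` of a degree-one lift is `1`-periodic, so it descends to a function
`φ_f` on the circle, whose Birkhoff sums along the circle map are the displacements `fⁿ x - x` of
the iterates. These lie within `1` of `n τ(f)` uniformly in `x`, while their integrals against an
invariant probability measure `μ` equal `n ∫ φ_f dμ`; hence `τ(f) = ∫ φ_f dμ`. As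
`φ_{f₁ f₂} = φ_{f₁} ∘ g₂ + φ_{f₂}` with `g₂` the circle map of `f₂`, invariance of `μ` under `g₂`
makes `τ` additive.
-/

open MeasureTheory Filter Topology

theorem eq_of_forall_natCast_mul_abs_sub_le {a b C : ℝ} (h : ∀ n : ℕ, n * |a - b| ≤ C) :
    a = b := by
  by_contra hne
  have hpos : 0 < |a - b| := abs_pos.2 (sub_ne_zero.2 hne)
  obtain ⟨n, hn⟩ := exists_nat_gt (C / |a - b|)
  rw [div_lt_iff₀ hpos] at hn
  linarith [h n]

theorem AddCircle.continuous_of_continuous_comp_coe {p : ℝ} {X : Type*} [TopologicalSpace X]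
    {h : AddCircle p → X} (hh : Continuous fun x : ℝ => h x) : Continuous h :=
  (QuotientAddGroup.isQuotientMap_mk _).continuous_iff.2 hh

namespace MeasureTheory.MeasurePreserving

variable {α β E : Type*} [MeasurableSpace α] [MeasurableSpace β] [NormedAddCommGroup E]
  {μ : Measure α}

theorem integral_comp_of_aestronglyMeasurable [NormedSpace ℝ E] {ν : Measure β} {f : α → β}
    (hf : MeasurePreserving f μ ν) {φ : β → E} (hφ : AEStronglyMeasurable φ ν) :
    ∫ x, φ (f x) ∂μ = ∫ y, φ y ∂ν := by
  rw [← integral_map hf.measurable.aemeasurable (hf.map_eq ▸ hφ), hf.map_eq]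

variable {f : α → α} {φ : α → E}

theorem integrable_birkhoffSum_s1 (hf : MeasurePreserving f μ μ) (hφ : Integrable φ μ) (n : ℕ) :
    Integrable (birkhoffSum f φ n) μ :=
  integrable_finsetSum (f := fun k x => φ (f^[k] x)) _
    fun k _ => (hf.iterate k).integrable_comp_of_integrable hφ

theorem integral_birkhoffSum_s1 [NormedSpace ℝ E] (hf : MeasurePreserving f μ μ)
    (hφ : Integrable φ μ) (n : ℕ) :
    ∫ x, birkhoffSum f φ n x ∂μ = n • ∫ x, φ x ∂μ := by
  unfold birkhoffSum
  rw [integral_finsetSum (f := fun k x => φ (f^[k] x)) _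
    fun k _ => (hf.iterate k).integrable_comp_of_integrable hφ]
  simp [fun k => (hf.iterate k).integral_comp_of_aestronglyMeasurable hφ.aestronglyMeasurable]

end MeasureTheory.MeasurePreserving

namespace CircleDeg1Lift

local notation "τ" => translationNumber

variable (f : CircleDeg1Lift)

theorem abs_map_sub_sub_translationNumber_lt (x : ℝ) : |f x - x - τ f| < 1 := by
  rw [abs_sub_lt_iff]
  constructor
  · linarith [f.map_lt_add_translationNumber_add_one x]
  · linarith [f.translationNumber_le_ceil_sub x, Int.ceil_lt_add_one (f x - x)]

theorem abs_pow_apply_sub_sub_mul_translationNumber_lt (n : ℕ) (x : ℝ) :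
    |(f ^ n) x - x - n * τ f| < 1 := by
  simpa [translationNumber_pow] using (f ^ n).abs_map_sub_sub_translationNumber_lt x

def displacement : AddCircle (1 : ℝ) → ℝ :=
  Function.Periodic.lift (f := fun x => f x - x) fun x => by simp [map_add_one]

@[simp]
theorem displacement_coe (x : ℝ) : f.displacement x = f x - x := rfl

variable {f}

theorem continuous_displacement (hf : Continuous f) : Continuous f.displacement :=
  AddCircle.continuous_of_continuous_comp_coe (hf.sub continuous_id)

theorem birkhoffSum_displacement {g : AddCircle (1 : ℝ) → AddCircle (1 : ℝ)}
    (hfg : ∀ x : ℝ, g x = f x) (n : ℕ) (x : ℝ) :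
    birkhoffSum g f.displacement n x = (f ^ n) x - x := by
  induction n generalizing x with
  | zero => simp
  | succ n ih =>
    rw [birkhoffSum_succ', hfg, ih, displacement_coe, pow_succ, mul_apply]
    ring

variable {μ : Measure (AddCircle (1 : ℝ))}

theorem integrable_displacement [IsFiniteMeasure μ] (hf : Continuous f) :
    Integrable f.displacement μ :=
  (continuous_displacement hf).integrable_of_hasCompactSupport
    (HasCompactSupport.of_compactSpace _)

theorem translationNumber_eq_integral_displacement [IsProbabilityMeasure μ] (hf : Continuous f)
    {g : AddCircle (1 : ℝ) → AddCircle (1 : ℝ)} (hg : MeasurePreserving g μ μ)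
    (hfg : ∀ x : ℝ, g x = f x) : τ f = ∫ y, f.displacement y ∂μ := by
  have hφ : Integrable f.displacement μ := integrable_displacement hf
  refine (eq_of_forall_natCast_mul_abs_sub_le (C := 1) fun n => ?_).symm
  have hbound : ∀ y, ‖birkhoffSum g f.displacement n y - n * τ f‖ ≤ 1 := by
    intro y
    obtain ⟨x, rfl⟩ := QuotientAddGroup.mk_surjective y
    rw [Real.norm_eq_abs, birkhoffSum_displacement hfg]
    exact (f.abs_pow_apply_sub_sub_mul_translationNumber_lt n x).le
  have hnorm := norm_integral_le_of_norm_le_const (μ := μ) (Eventually.of_forall hbound)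
  rw [integral_sub (hg.integrable_birkhoffSum_s1 hφ n) (integrable_const _),
    hg.integral_birkhoffSum_s1 hφ, integral_const] at hnorm
  simpa [Real.norm_eq_abs, ← mul_sub, abs_mul] using hnorm

theorem translationNumber_mul_of_measurePreserving [IsProbabilityMeasure μ] {f₁ f₂ : CircleDeg1Lift}
    (hf₁ : Continuous f₁) (hf₂ : Continuous f₂) {g₁ g₂ : AddCircle (1 : ℝ) → AddCircle (1 : ℝ)}
    (hg₁ : MeasurePreserving g₁ μ μ) (hg₂ : MeasurePreserving g₂ μ μ)
    (hfg₁ : ∀ x : ℝ, g₁ x = f₁ x) (hfg₂ : ∀ x : ℝ, g₂ x = f₂ x) :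
    τ (f₁ * f₂) = τ f₁ + τ f₂ := by
  have hdisp : (f₁ * f₂).displacement = fun y => f₁.displacement (g₂ y) + f₂.displacement y := by
    funext y
    obtain ⟨x, rfl⟩ := QuotientAddGroup.mk_surjective y
    simp only [displacement_coe, hfg₂, mul_apply]
    ring
  have hfg : ∀ x : ℝ, (g₁ ∘ g₂) x = (f₁ * f₂) x := fun x => by simp [hfg₁, hfg₂]
  rw [translationNumber_eq_integral_displacement (coe_mul f₁ f₂ ▸ hf₁.comp hf₂) (hg₁.comp hg₂) hfg,
    hdisp, integral_add, hg₂.integral_comp_of_aestronglyMeasurable,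
    ← translationNumber_eq_integral_displacement hf₁ hg₁ hfg₁,
    ← translationNumber_eq_integral_displacement hf₂ hg₂ hfg₂]
  exacts [(integrable_displacement hf₁).aestronglyMeasurable,
    hg₂.integrable_comp_of_integrable (integrable_displacement hf₁), integrable_displacement hf₂]

end CircleDeg1Lift

theorem translation_number_add_of_measure_preserving_general
    (F G : ℝ → ℝ)
    (hFc : Continuous F) (hFm : StrictMono F)
    (hFper : ∀ x : ℝ, F (x + 1) = F x + 1)
    (hGc : Continuous G) (hGm : StrictMono G)
    (hGper : ∀ x : ℝ, G (x + 1) = G x + 1)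
    (f g : AddCircle (1 : ℝ) → AddCircle (1 : ℝ))
    (hliftF : ∀ x : ℝ, f (x : AddCircle (1 : ℝ)) = ((F x : ℝ) : AddCircle (1 : ℝ)))
    (hliftG : ∀ x : ℝ, g (x : AddCircle (1 : ℝ)) = ((G x : ℝ) : AddCircle (1 : ℝ)))
    (μ : Measure (AddCircle (1 : ℝ))) [IsProbabilityMeasure μ]
    (hinvf : Measure.map f μ = μ) (hinvg : Measure.map g μ = μ)
    (τF τG : ℝ)
    (hτF : Tendsto (fun n : ℕ => F^[n] 0 / (n : ℝ)) atTop (𝓝 τF))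
    (hτG : Tendsto (fun n : ℕ => G^[n] 0 / (n : ℝ)) atTop (𝓝 τG)) :
    Tendsto (fun n : ℕ => (F ∘ G)^[n] 0 / (n : ℝ)) atTop (𝓝 (τF + τG)) := by
  let F' : CircleDeg1Lift := ⟨⟨F, hFm.monotone⟩, hFper⟩
  let G' : CircleDeg1Lift := ⟨⟨G, hGm.monotone⟩, hGper⟩
  have hf : MeasurePreserving f μ μ :=
    ⟨(AddCircle.continuous_of_continuous_comp_coe (by simp only [hliftF]; fun_prop)).measurable,
      hinvf⟩
  have hg : MeasurePreserving g μ μ :=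
    ⟨(AddCircle.continuous_of_continuous_comp_coe (by simp only [hliftG]; fun_prop)).measurable,
      hinvg⟩
  have htendsto (H : CircleDeg1Lift) :
      Tendsto (fun n : ℕ => H^[n] 0 / (n : ℝ)) atTop (𝓝 H.translationNumber) := by
    simpa only [CircleDeg1Lift.coe_pow] using H.tendsto_translation_number₀
  rw [tendsto_nhds_unique hτF (htendsto F'), tendsto_nhds_unique hτG (htendsto G'),
    ← CircleDeg1Lift.translationNumber_mul_of_measurePreserving (f₁ := F') (f₂ := G') hFc hGc
      hf hg hliftF hliftG]
  exact htendsto (F' * G')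

/-- If `F, G : ℝ → ℝ` are lifts of orientation-preserving circle
homeomorphisms `f, g` that both preserve a Borel probability measure `μ` on the
circle, then the translation number of `F ∘ G` equals `τ(F) + τ(G)`. -/
theorem translation_number_add_of_measure_preserving
    (F G : ℝ → ℝ)
    (hFc : Continuous F) (hFm : StrictMono F) (hFsurj : Function.Surjective F)
    (hFper : ∀ x : ℝ, F (x + 1) = F x + 1)
    (hGc : Continuous G) (hGm : StrictMono G) (hGsurj : Function.Surjective G)
    (hGper : ∀ x : ℝ, G (x + 1) = G x + 1)
    (f g : AddCircle (1 : ℝ) → AddCircle (1 : ℝ))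
    (hliftF : ∀ x : ℝ, f (x : AddCircle (1 : ℝ)) = ((F x : ℝ) : AddCircle (1 : ℝ)))
    (hliftG : ∀ x : ℝ, g (x : AddCircle (1 : ℝ)) = ((G x : ℝ) : AddCircle (1 : ℝ)))
    (μ : Measure (AddCircle (1 : ℝ))) [IsProbabilityMeasure μ]
    (hinvf : Measure.map f μ = μ) (hinvg : Measure.map g μ = μ)
    (τF τG : ℝ)
    (hτF : Tendsto (fun n : ℕ => F^[n] 0 / (n : ℝ)) atTop (𝓝 τF))
    (hτG : Tendsto (fun n : ℕ => G^[n] 0 / (n : ℝ)) atTop (𝓝 τG)) :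
    Tendsto (fun n : ℕ => (F ∘ G)^[n] 0 / (n : ℝ)) atTop (𝓝 (τF + τG)) :=
  translation_number_add_of_measure_preserving_general F G hFc hFm hFper hGc hGm hGper f g hliftF
    hliftG μ hinvf hinvg τF τG hτF hτG
end

section
/- Let f₀(x,y) = (x+y, y) and g₀(x,y) = (x, y+1) on ℝ². For ANY choices of lifts of the induced maps on the annulus ℝ²/⟨h₀⟩ (h₀ horizontal translation by 1) — that is, for any F = h₀^a ∘ f₀ and G = h₀^b ∘ g₀ with a, b ∈ ℤ — the commutator [F, G] equals [f₀, g₀] ≠ id. In particular F and G never commute. -/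
/-
The translation `h₀` commutes with `f₀` and `g₀`, so the powers of `h₀` that distinguish one choice
of lifts from another cancel out of the commutator. And `[f₀, g₀]` is `h₀` itself, because
conjugating the shear `f₀` by the vertical translation `g₀` gives `h₀⁻¹ ∘ f₀`.
-/

def planeF0 : Equiv.Perm (ℝ × ℝ) where
  toFun p := (p.1 + p.2, p.2)
  invFun p := (p.1 - p.2, p.2)
  left_inv := by rintro ⟨x, y⟩; simp
  right_inv := by rintro ⟨x, y⟩; simp

def planeG0 : Equiv.Perm (ℝ × ℝ) where
  toFun p := (p.1, p.2 + 1)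
  invFun p := (p.1, p.2 - 1)
  left_inv := by rintro ⟨x, y⟩; simp
  right_inv := by rintro ⟨x, y⟩; simp

def planeH0 : Equiv.Perm (ℝ × ℝ) where
  toFun p := (p.1 + 1, p.2)
  invFun p := (p.1 - 1, p.2)
  left_inv := by rintro ⟨x, y⟩; simp
  right_inv := by rintro ⟨x, y⟩; simp

open scoped commutatorElement

theorem Commute.commutatorElement_right {G : Type*} [Group G] {z x y : G}
    (hzx : Commute z x) (hzy : Commute z y) : Commute z ⁅x, y⁆ :=
  ((hzx.mul_right hzy).mul_right hzx.inv_right).mul_right hzy.inv_right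

theorem commutatorElement_mul_left_of_commute {G : Type*} [Group G] {z x y : G}
    (hzx : Commute z x) (hzy : Commute z y) : ⁅z * x, y⁆ = ⁅x, y⁆ := by
  rw [commutatorElement_mul_left_eq_conj_mul, hzy.commutator_eq, mul_one,
    (hzx.commutatorElement_right hzy).eq, mul_inv_cancel_right]

theorem commutatorElement_mul_right_of_commute {G : Type*} [Group G] {x w y : G}
    (hwx : Commute w x) (hwy : Commute w y) : ⁅x, w * y⁆ = ⁅x, y⁆ := by
  rw [commutatorElement_mul_right_eq_mul_conj, hwx.symm.commutator_eq, one_mul,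
    (hwx.commutatorElement_right hwy).eq, mul_inv_cancel_right]

@[simp]
theorem planeF0_apply (p : ℝ × ℝ) : planeF0 p = (p.1 + p.2, p.2) := rfl

@[simp]
theorem planeG0_apply (p : ℝ × ℝ) : planeG0 p = (p.1, p.2 + 1) := rfl

@[simp]
theorem planeH0_apply (p : ℝ × ℝ) : planeH0 p = (p.1 + 1, p.2) := rfl

@[simp]
theorem planeF0_symm_apply (p : ℝ × ℝ) : planeF0.symm p = (p.1 - p.2, p.2) := rfl

@[simp]
theorem planeG0_symm_apply (p : ℝ × ℝ) : planeG0.symm p = (p.1, p.2 - 1) := rfl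

theorem commute_planeH0_planeF0 : Commute planeH0 planeF0 := by
  ext p <;> simp; ring

theorem commute_planeH0_planeG0 : Commute planeH0 planeG0 := by
  ext p <;> simp

theorem commutatorElement_planeF0_planeG0 : ⁅planeF0, planeG0⁆ = planeH0 := by
  ext p <;> simp [commutatorElement_def]; ring

theorem planeH0_ne_one : planeH0 ≠ 1 := fun h ↦ by
  simpa using congrArg (fun e : Equiv.Perm (ℝ × ℝ) ↦ (e 0).1) h

/-- For ANY choices of lifts `F = h₀^a ∘ f₀` and `G = h₀^b ∘ g₀`
(`a, b ∈ ℤ`) of the induced annulus maps, the commutator `[F, G]` equals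
`[f₀, g₀] ≠ id`; in particular `F` and `G` never commute. -/
theorem lifts_never_commute (a b : ℤ) :
    ⁅planeH0 ^ a * planeF0, planeH0 ^ b * planeG0⁆ = ⁅planeF0, planeG0⁆ ∧
    ⁅planeF0, planeG0⁆ ≠ 1 := by
  refine ⟨?_, commutatorElement_planeF0_planeG0 ▸ planeH0_ne_one⟩
  have hF (n : ℤ) : Commute (planeH0 ^ n) planeF0 := commute_planeH0_planeF0.zpow_left n
  have hG (n : ℤ) : Commute (planeH0 ^ n) planeG0 := commute_planeH0_planeG0.zpow_left n
  rw [commutatorElement_mul_left_of_commute (hF a)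
      ((Commute.zpow_zpow_self planeH0 a b).mul_right (hG a)),
    commutatorElement_mul_right_of_commute (hF b) (hG b)]
end

section
/- In the discrete Heisenberg group H = ⟨f, g : [f,g] = h central⟩, if m and n are coprime and a, b are integers with am + bn = 1, then the elements f^m g^n and f^{−b} g^a generate H. -/
/-!
The commutator of `f^m g^n` and `f^(-b) g^a` is `h^(am + bn) = h`, so the subgroup they generate
contains the centre `⟨h⟩`. Modulo the centre, `H` is `ℤ²` and the two elements become `(m, n)` and
`(-b, a)`, a basis of `ℤ²` since `am + bn = 1`; hence the subgroup also contains `f` and `g`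
up to central factors, that is, `f` and `g` themselves.
-/

def HeisX : Matrix.SpecialLinearGroup (Fin 3) ℤ :=
  ⟨!![1, 1, 0; 0, 1, 0; 0, 0, 1], by simp [Matrix.det_fin_three, Matrix.vecHead, Matrix.vecTail]⟩

def HeisY : Matrix.SpecialLinearGroup (Fin 3) ℤ :=
  ⟨!![1, 0, 0; 0, 1, 1; 0, 0, 1], by simp [Matrix.det_fin_three, Matrix.vecHead, Matrix.vecTail]⟩

open scoped commutatorElement

section Heisenberg

variable {R : Type*} [CommRing R]

-- `f = heis 1 0 0`, `g = heis 0 1 0`, and `h = [f, g] = heis 0 0 1` generates the centre `{heis 0 0 r}`.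
def heis (p q r : R) : Matrix.SpecialLinearGroup (Fin 3) R :=
  ⟨!![1, p, r; 0, 1, q; 0, 0, 1], by simp [Matrix.det_fin_three]⟩

theorem heis_mul (p q r p' q' r' : R) :
    heis p q r * heis p' q' r' = heis (p + p') (q + q') (r + r' + p * q') := by
  ext i j
  show ((heis p q r : Matrix (Fin 3) (Fin 3) R) * heis p' q' r') i j = _
  fin_cases i <;> fin_cases j <;> simp [heis, Matrix.mul_apply, Fin.sum_univ_three] <;> ring

theorem heis_zero_zero_zero : heis (0 : R) 0 0 = 1 := by
  ext i j
  fin_cases i <;> fin_cases j <;> simp [heis]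

theorem heis_inv (p q r : R) : (heis p q r)⁻¹ = heis (-p) (-q) (p * q - r) := by
  rw [inv_eq_iff_mul_eq_one, heis_mul, ← heis_zero_zero_zero]
  congr 1 <;> ring

theorem heis_commutatorElement (p q r p' q' r' : R) :
    ⁅heis p q r, heis p' q' r'⁆ = heis 0 0 (p * q' - p' * q) := by
  simp only [commutatorElement_def, heis_inv, heis_mul]
  congr 1 <;> ring

theorem heis_zpow (p q r : R) (k : ℤ) : ∃ s, heis p q r ^ k = heis (k * p) (k * q) s := by
  induction k using Int.induction_on with
  | zero => exact ⟨0, by simp [heis_zero_zero_zero]⟩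
  | succ k ih =>
    obtain ⟨s, hs⟩ := ih
    refine ⟨s + r + k * p * q, ?_⟩
    rw [zpow_add_one, hs, heis_mul]
    congr 1 <;> push_cast <;> ring
  | pred k ih =>
    obtain ⟨s, hs⟩ := ih
    refine ⟨s + (p * q - r) + k * p * q, ?_⟩
    rw [zpow_sub_one, hs, heis_inv, heis_mul]
    congr 1 <;> push_cast <;> ring

theorem heis_zero_zero_zpow (r : R) (k : ℤ) : heis 0 0 r ^ k = heis 0 0 (k * r) := by
  induction k using Int.induction_on with
  | zero => simp [heis_zero_zero_zero]
  | succ k ih =>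
    rw [zpow_add_one, ih, heis_mul]
    congr 1 <;> push_cast <;> ring
  | pred k ih =>
    rw [zpow_sub_one, ih, heis_inv, heis_mul]
    congr 1 <;> push_cast <;> ring

variable {S : Subgroup (Matrix.SpecialLinearGroup (Fin 3) R)}

theorem heis_mem_of_mem (hc : ∀ t, heis 0 0 t ∈ S) {p q r : R} (h : heis p q r ∈ S) (r' : R) :
    heis p q r' ∈ S := by
  simpa [heis_mul] using mul_mem h (hc (r' - r))

theorem heis_lincomb_mem (hc : ∀ t, heis 0 0 t ∈ S) {p q r p' q' r' : R}
    (h : heis p q r ∈ S) (h' : heis p' q' r' ∈ S) (x y : ℤ) (s : R) :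
    heis (x * p + y * p') (x * q + y * q') s ∈ S := by
  obtain ⟨t, ht⟩ := heis_zpow p q r x
  obtain ⟨t', ht'⟩ := heis_zpow p' q' r' y
  have := mul_mem (zpow_mem h x) (zpow_mem h' y)
  rw [ht, ht', heis_mul] at this
  exact heis_mem_of_mem hc this s

end Heisenberg

theorem heis_zero_zero_mem_of_det_eq_one {S : Subgroup (Matrix.SpecialLinearGroup (Fin 3) ℤ)}
    {p q r p' q' r' : ℤ} (h : heis p q r ∈ S) (h' : heis p' q' r' ∈ S) (hdet : p * q' - p' * q = 1)
    (t : ℤ) : heis 0 0 t ∈ S := by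
  have hcomm : heis 0 0 1 ∈ S := by
    rw [← hdet, ← heis_commutatorElement, commutatorElement_def]
    exact mul_mem (mul_mem (mul_mem h h') (inv_mem h)) (inv_mem h')
  have := zpow_mem hcomm t
  rwa [heis_zero_zero_zpow, Int.cast_id, mul_one] at this

theorem heisX_eq : HeisX = heis (1 : ℤ) 0 0 := rfl

theorem heisY_eq : HeisY = heis (0 : ℤ) 1 0 := rfl

theorem heisX_zpow_mul_heisY_zpow (k l : ℤ) : ∃ r, HeisX ^ k * HeisY ^ l = heis k l r := by
  obtain ⟨s, hs⟩ := heis_zpow (1 : ℤ) 0 0 k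
  obtain ⟨s', hs'⟩ := heis_zpow (0 : ℤ) 1 0 l
  exact ⟨s + s' + k * l, by simp [heisX_eq, heisY_eq, hs, hs', heis_mul]⟩

theorem heisenberg_generated_by_coprime_pair_general
    (m n a b : ℤ) (hab : a * m + b * n = 1) :
    Subgroup.closure ({HeisX ^ m * HeisY ^ n, HeisX ^ (-b) * HeisY ^ a} :
        Set (Matrix.SpecialLinearGroup (Fin 3) ℤ)) =
      Subgroup.closure {HeisX, HeisY} := by
  set S := Subgroup.closure ({HeisX ^ m * HeisY ^ n, HeisX ^ (-b) * HeisY ^ a} :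
    Set (Matrix.SpecialLinearGroup (Fin 3) ℤ))
  obtain ⟨r, hu⟩ := heisX_zpow_mul_heisY_zpow m n
  obtain ⟨r', hv⟩ := heisX_zpow_mul_heisY_zpow (-b) a
  have huS : heis m n r ∈ S := hu ▸ Subgroup.subset_closure (Set.mem_insert _ _)
  have hvS : heis (-b) a r' ∈ S := hv ▸ Subgroup.subset_closure (Set.mem_insert_of_mem _ rfl)
  have hc := heis_zero_zero_mem_of_det_eq_one huS hvS (by linarith)
  have hf := Subgroup.subset_closure (Set.mem_insert HeisX {HeisY})
  have hg := Subgroup.subset_closure (Set.mem_insert_of_mem HeisX (Set.mem_singleton HeisY))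
  refine le_antisymm ((Subgroup.closure_le _).mpr (Set.pair_subset ?_ ?_))
    ((Subgroup.closure_le _).mpr (Set.pair_subset ?_ ?_))
  · exact mul_mem (zpow_mem hf m) (zpow_mem hg n)
  · exact mul_mem (zpow_mem hf (-b)) (zpow_mem hg a)
  · rw [SetLike.mem_coe, heisX_eq]
    convert heis_lincomb_mem hc huS hvS a (-n) 0 using 2 <;> push_cast <;> linarith
  · rw [SetLike.mem_coe, heisY_eq]
    convert heis_lincomb_mem hc huS hvS b m 0 using 2 <;> push_cast <;> linarith

/-- In the discrete Heisenberg group `H = ⟨f, g⟩` (with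
`h = [f,g]` central; here `f = X`, `g = Y` are the standard unitriangular
matrix generators), if `m` and `n` are coprime and `a·m + b·n = 1`, then the
elements `f^m g^n` and `f^{-b} g^a` generate `H`. -/
theorem heisenberg_generated_by_coprime_pair
    (m n a b : ℤ) (hmn : IsCoprime m n) (hab : a * m + b * n = 1) :
    Subgroup.closure ({HeisX ^ m * HeisY ^ n, HeisX ^ (-b) * HeisY ^ a} :
        Set (Matrix.SpecialLinearGroup (Fin 3) ℤ)) =
      Subgroup.closure {HeisX, HeisY} :=
  heisenberg_generated_by_coprime_pair_general m n a b hab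
end

section
/- Let f, g, h be homeomorphisms of ℝ² with h(x,y) = (x+1,y), f∘h = h∘f, g∘h = h∘g, and [f,g] = h. Suppose ℓ ⊂ ℝ² is an h-invariant properly embedded line (the preimage of an essential circle in the annulus ℝ²/h) with f(ℓ) = ℓ. If there exists x ∈ ℓ with g(x) ∈ ℓ, then a contradiction follows; hence g(ℓ) ∩ ℓ = ∅, i.e., the projection ḡ moves the circle ℓ/h off itself. -/
open Set Topology

/-!
Lift `f` and `h` through the parametrisation `γ` to commuting homeomorphisms `F`, `H` of `ℝ`;
the horizontal coordinate `φ = (γ ·).1` satisfies `φ ∘ H = φ + 1`. Having no fixed point, `H` acts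
on `ℝ` like a translation with a compact fundamental domain, and every iterate `Fⁿ` is increasing
and commutes with `H`, so it preserves the `H`-level between two parameters: `φ (Fⁿ t) - φ (Fⁿ s)`
stays bounded in `n`. But if `x = γ s` and `g x = γ t`, then `fⁿ ∘ g = hⁿ ∘ g ∘ fⁿ`, together with
the bounded horizontal displacement of `g` along the cocompact line `ℓ`, makes this difference
grow like `n`.
-/

theorem pow_mul_eq_pow_mul_mul_pow {M : Type*} [Monoid M] {f g h : M} (hfh : Commute f h)
    (hfg : f * g = h * g * f) (n : ℕ) : f ^ n * g = h ^ n * g * f ^ n := by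
  induction n with
  | zero => simp
  | succ n ih =>
    calc f ^ (n + 1) * g = f * (f ^ n * g) := by rw [pow_succ', mul_assoc]
      _ = h ^ n * (f * g) * f ^ n := by
        rw [ih, ← mul_assoc, ← mul_assoc, (hfh.pow_right n).eq, mul_assoc _ f g]
      _ = h ^ (n + 1) * g * f ^ (n + 1) := by
        rw [hfg, pow_succ h, pow_succ' f]; simp only [mul_assoc]

theorem forall_lt_or_forall_gt_of_forall_ne {f : ℝ → ℝ} (hf : Continuous f)
    (hne : ∀ t, f t ≠ t) : (∀ t, t < f t) ∨ (∀ t, f t < t) := by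
  by_contra! h
  obtain ⟨⟨a, ha⟩, ⟨b, hb⟩⟩ := h
  obtain ⟨c, hc⟩ := intermediate_value_univ a b (hf.sub continuous_id)
    ⟨sub_nonpos.2 ha, sub_nonneg.2 hb⟩
  exact hne c (sub_eq_zero.1 hc)

theorem Topology.IsEmbedding.exists_homeomorph_semiconj {X Y : Type*} [TopologicalSpace X]
    [TopologicalSpace Y] {γ : X → Y} (hγ : IsEmbedding γ) (f : Y ≃ₜ Y)
    (hf : f '' range γ = range γ) : ∃ F : X ≃ₜ X, ∀ x, γ (F x) = f (γ x) := by
  let E := hγ.toHomeomorph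
  refine ⟨(E.trans ((f.image (range γ)).trans (Homeomorph.setCongr hf))).trans E.symm, fun x => ?_⟩
  show ((E (E.symm _) : range γ) : Y) = _
  rw [E.apply_symm_apply]
  rfl

namespace Homeomorph

variable {X Y : Type*} [TopologicalSpace X] [TopologicalSpace Y]

theorem apply_zpow_apply_eq_add_mul (H : X ≃ₜ X) {φ : X → ℝ} {c : ℝ}
    (hφ : ∀ x, φ (H x) = φ x + c) (k : ℤ) (x : X) :
    φ ((H ^ k) x) = φ x + k * c := by
  induction k using Int.induction_on generalizing x with
  | zero => simp
  | succ k ih => rw [zpow_add_one, mul_apply, ih, hφ]; push_cast; ring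
  | pred k ih =>
    have hx := hφ (H⁻¹ x)
    rw [← mul_apply, mul_inv_cancel, one_apply] at hx
    rw [zpow_sub_one, mul_apply, ih]; push_cast; linarith

theorem apply_pow_apply_of_semiconj {γ : X → Y} {F : X ≃ₜ X} {f : Y ≃ₜ Y}
    (h : ∀ x, γ (F x) = f (γ x)) (n : ℕ) (x : X) : γ ((F ^ n) x) = (f ^ n) (γ x) := by
  induction n generalizing x with
  | zero => rfl
  | succ n ih => rw [pow_succ, pow_succ, mul_apply, mul_apply, ih, h]

theorem exists_abs_le_of_subset_iUnion_zpow_image (h : X ≃ₜ X) {ψ : X → ℝ} (hψ : Continuous ψ)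
    (hψh : ∀ p, ψ (h p) = ψ p) {K S : Set X} (hK : IsCompact K)
    (hS : S ⊆ ⋃ n : ℤ, (h ^ n) '' K) : ∃ B, ∀ y ∈ S, |ψ y| ≤ B := by
  obtain ⟨B, hB⟩ := hK.exists_bound_of_continuousOn hψ.continuousOn
  refine ⟨B, fun y hy => ?_⟩
  obtain ⟨n, p, hp, rfl⟩ := mem_iUnion.1 (hS hy)
  have hψ0 : ∀ p, ψ (h p) = ψ p + 0 := by simpa using hψh
  simpa [h.apply_zpow_apply_eq_add_mul hψ0] using hB p hp

theorem zpow_apply_eq_of_translation {h : (ℝ × ℝ) ≃ₜ (ℝ × ℝ)}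
    (hh : ∀ p : ℝ × ℝ, h p = (p.1 + 1, p.2)) (n : ℤ) (p : ℝ × ℝ) :
    (h ^ n) p = (p.1 + n, p.2) := by
  ext
  · simpa using h.apply_zpow_apply_eq_add_mul (φ := Prod.fst) (c := 1) (by simp [hh]) n p
  · simpa using h.apply_zpow_apply_eq_add_mul (φ := Prod.snd) (c := 0) (by simp [hh]) n p

section Real

variable {H : ℝ ≃ₜ ℝ} {φ : ℝ → ℝ}

theorem strictMono_of_commute (hH : ∀ t, t < H t) {F : ℝ ≃ₜ ℝ} (hF : Commute F H) :
    StrictMono F := by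
  refine (F.continuous.strictMono_of_inj F.injective).resolve_right fun hanti => ?_
  have h : (F * H) 0 < F 0 := hanti (hH 0)
  rw [hF.eq] at h
  exact (hH (F 0)).not_gt h

theorem strictMono_zpow_apply (hH : ∀ t, t < H t) (s : ℝ) :
    StrictMono fun k : ℤ => (H ^ k) s :=
  strictMono_int_of_lt_succ fun k => by
    rw [add_comm, zpow_one_add, mul_apply]
    exact hH _

theorem exists_abs_le_of_zpow_apply_mem_Icc (hφ : Continuous φ)
    (hφH : ∀ t, φ (H t) = φ t + 1) (s a b : ℝ) :
    ∃ N : ℝ, ∀ k : ℤ, (H ^ k) s ∈ Icc a b → |(k : ℝ)| ≤ N := by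
  obtain ⟨M, hM⟩ := isCompact_Icc.exists_bound_of_continuousOn (hφ.continuousOn (s := Icc a b))
  refine ⟨M + |φ s|, fun k hk => ?_⟩
  have h := hM _ hk
  rw [Real.norm_eq_abs, apply_zpow_apply_eq_add_mul H hφH, mul_one] at h
  calc |(k : ℝ)| = |(φ s + k) - φ s| := by ring_nf
    _ ≤ |φ s + k| + |φ s| := abs_sub _ _
    _ ≤ M + |φ s| := by gcongr

theorem exists_zpow_apply_le_lt (hH : ∀ t, t < H t) (hφ : Continuous φ)
    (hφH : ∀ t, φ (H t) = φ t + 1) (s t : ℝ) :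
    ∃ k : ℤ, (H ^ k) s ≤ t ∧ t < (H ^ (k + 1)) s := by
  have hmono := strictMono_zpow_apply hH s
  have hzero : (H ^ (0 : ℤ)) s = s := rfl
  obtain ⟨N, hN⟩ := exists_abs_le_of_zpow_apply_mem_Icc hφ hφH s (min s t) (max s t)
  obtain ⟨n, hn⟩ := exists_nat_gt N
  have habove : t < (H ^ (n : ℤ)) s := by
    by_contra! h
    have hs : s ≤ (H ^ (n : ℤ)) s := hzero ▸ hmono.monotone (Int.natCast_nonneg n)
    have := hN n ⟨min_le_left _ _ |>.trans hs, h.trans (le_max_right _ _)⟩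
    rw [Int.cast_natCast, abs_of_nonneg n.cast_nonneg] at this
    linarith
  have hbelow : (H ^ (-(n : ℤ))) s < t := by
    by_contra! h
    have hs : (H ^ (-(n : ℤ))) s ≤ s := hzero ▸ hmono.monotone (neg_nonpos.2 (Int.natCast_nonneg n))
    have := hN (-n) ⟨(min_le_right _ _).trans h, hs.trans (le_max_left _ _)⟩
    rw [Int.cast_neg, Int.cast_natCast, abs_neg, abs_of_nonneg n.cast_nonneg] at this
    linarith
  obtain ⟨k, hk, hmax⟩ := Int.exists_greatest_of_bdd
    ⟨n, fun k hk => (hmono.lt_iff_lt.1 (lt_of_le_of_lt hk habove)).le⟩ ⟨-n, hbelow.le⟩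
  exact ⟨k, hk, lt_of_not_ge fun h => (hmax _ h).not_gt (lt_add_one k)⟩

theorem exists_abs_sub_le_of_le_of_le_apply (hH : ∀ t, t < H t) (hφ : Continuous φ)
    (hφH : ∀ t, φ (H t) = φ t + 1) :
    ∃ C, ∀ u v, u ≤ v → v ≤ H u → |φ v - φ u| ≤ C := by
  obtain ⟨M, hM⟩ := isCompact_Icc.exists_bound_of_continuousOn
    (hφ.continuousOn (s := Icc 0 (H (H 0))))
  refine ⟨M + M, fun u v huv hvu => ?_⟩
  obtain ⟨k, hk, hk'⟩ := exists_zpow_apply_le_lt hH hφ hφH 0 u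
  have hHmono := (strictMono_of_commute hH (Commute.refl H)).monotone
  -- `G` moves `u` into the compact fundamental domain `[0, H 0]`
  set G := (H ^ k)⁻¹
  have hGH : Commute G H := ((Commute.refl H).zpow_left k).inv_left
  have hGmono := (strictMono_of_commute hH hGH).monotone
  have hφG : ∀ x, φ (G x) = φ x - k := fun x => by
    have h := apply_zpow_apply_eq_add_mul H hφH k (G x)
    rw [← mul_apply, mul_inv_cancel, one_apply] at h
    linarith
  have hu0 : 0 ≤ G u := by simpa [G] using hGmono hk
  have hu1 : G u ≤ H 0 := by simpa [G, zpow_add_one] using hGmono hk'.le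
  have hv : G v ≤ H (H 0) := calc
    G v ≤ G (H u) := hGmono hvu
    _ = H (G u) := DFunLike.congr_fun hGH.eq u
    _ ≤ H (H 0) := hHmono hu1
  have h1 := hM (G u) ⟨hu0, hu1.trans (hHmono (hH 0).le)⟩
  have h2 := hM (G v) ⟨hu0.trans (hGmono huv), hv⟩
  rw [Real.norm_eq_abs, hφG] at h1 h2
  calc |φ v - φ u| = |(φ v - k) - (φ u - k)| := by congr 1; ring
    _ ≤ |φ v - k| + |φ u - k| := abs_sub _ _
    _ ≤ M + M := add_le_add h2 h1

theorem exists_abs_sub_sub_le_of_commute_of_lt (hH : ∀ t, t < H t) (hφ : Continuous φ)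
    (hφH : ∀ t, φ (H t) = φ t + 1) :
    ∃ C, ∀ F : ℝ ≃ₜ ℝ, Commute F H → ∀ s t, |(φ (F t) - φ (F s)) - (φ t - φ s)| ≤ C := by
  obtain ⟨C, hC⟩ := exists_abs_sub_le_of_le_of_le_apply hH hφ hφH
  have hlevel : ∀ (k : ℤ) a b, (H ^ k) a ≤ b → b ≤ (H ^ (k + 1)) a → |φ b - φ a - k| ≤ C := by
    intro k a b h1 h2
    rw [add_comm, zpow_one_add, mul_apply] at h2
    simpa [apply_zpow_apply_eq_add_mul H hφH, sub_sub] using hC _ _ h1 h2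
  refine ⟨C + C, fun F hF s t => ?_⟩
  obtain ⟨k, hk, hk'⟩ := exists_zpow_apply_le_lt hH hφ hφH s t
  have hFmono := (strictMono_of_commute hH hF).monotone
  have hFzpow : ∀ (j : ℤ) x, F ((H ^ j) x) = (H ^ j) (F x) := fun j =>
    DFunLike.congr_fun (hF.zpow_right j).eq
  have hs := hlevel k s t hk hk'.le
  have hFs := hlevel k (F s) (F t) (hFzpow k s ▸ hFmono hk) (hFzpow (k + 1) s ▸ hFmono hk'.le)
  calc |(φ (F t) - φ (F s)) - (φ t - φ s)| = |(φ (F t) - φ (F s) - k) - (φ t - φ s - k)| := by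
        congr 1; ring
    _ ≤ |φ (F t) - φ (F s) - k| + |φ t - φ s - k| := abs_sub _ _
    _ ≤ C + C := add_le_add hFs hs

theorem exists_abs_sub_sub_le_of_commute (hφ : Continuous φ) (hφH : ∀ t, φ (H t) = φ t + 1) :
    ∃ C, ∀ F : ℝ ≃ₜ ℝ, Commute F H → ∀ s t, |(φ (F t) - φ (F s)) - (φ t - φ s)| ≤ C := by
  have hne : ∀ t, H t ≠ t := fun t h => by simpa [h] using hφH t
  rcases forall_lt_or_forall_gt_of_forall_ne H.continuous hne with hH | hH
  · exact exists_abs_sub_sub_le_of_commute_of_lt hH hφ hφH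
  · have hφH' : ∀ t, -φ (H⁻¹ t) = -φ t + 1 := fun t => by
      have h := hφH (H⁻¹ t)
      rw [← mul_apply, mul_inv_cancel, one_apply] at h
      linarith
    obtain ⟨C, hC⟩ := exists_abs_sub_sub_le_of_commute_of_lt (H := H⁻¹) (φ := fun t => -φ t)
      (fun t => by simpa using hH (H⁻¹ t)) hφ.neg hφH'
    refine ⟨C, fun F hF s t => ?_⟩
    have h := hC F hF.inv_right s t
    rwa [← abs_neg, show -(-φ (F t) - -φ (F s) - (-φ t - -φ s))
      = φ (F t) - φ (F s) - (φ t - φ s) by ring] at h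

end Real

end Homeomorph

/-- Let `f, g, h` be homeomorphisms of `ℝ²` with `h` the horizontal
translation by 1, `f` and `g` commuting with `h`, and `[f,g] = h` (expressed as
`f ∘ g = h ∘ g ∘ f`). Let `ℓ` be an `h`-invariant properly embedded line — the
preimage of an essential circle in the annulus `ℝ²/h`, so that `ℓ` is cocompact
under the integer horizontal translations — with `f(ℓ) = ℓ`. Then `g(ℓ) ∩ ℓ = ∅`:
no point of `ℓ` is sent by `g` into `ℓ`. -/
theorem invariant_line_moved_off_itself
    (f g h : (ℝ × ℝ) ≃ₜ (ℝ × ℝ))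
    (hh : ∀ p : ℝ × ℝ, h p = (p.1 + 1, p.2))
    (hfh : ∀ p, f (h p) = h (f p)) (hgh : ∀ p, g (h p) = h (g p))
    (hcomm : ∀ p, f (g p) = h (g (f p)))
    (ℓ : Set (ℝ × ℝ))
    (γ : ℝ → ℝ × ℝ) (hγ : Topology.IsClosedEmbedding γ) (hrange : Set.range γ = ℓ)
    (hinv : h '' ℓ = ℓ)
    (hcocompact : ∃ K : Set (ℝ × ℝ), IsCompact K ∧
      ℓ ⊆ ⋃ n : ℤ, (fun p : ℝ × ℝ => (p.1 + n, p.2)) '' K)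
    (hfℓ : f '' ℓ = ℓ) :
    ∀ x ∈ ℓ, g x ∉ ℓ := by
  subst hrange
  rintro _ ⟨s, rfl⟩ ⟨t, ht⟩
  obtain ⟨H, hH⟩ := hγ.isEmbedding.exists_homeomorph_semiconj h hinv
  obtain ⟨F, hF⟩ := hγ.isEmbedding.exists_homeomorph_semiconj f hfℓ
  have hFH : Commute F H := Homeomorph.ext fun u => hγ.injective (by simp [hF, hH, hfh])
  obtain ⟨C, hC⟩ := Homeomorph.exists_abs_sub_sub_le_of_commute (H := H) (φ := fun u => (γ u).1)
    (continuous_fst.comp hγ.continuous) (by simp [hH, hh])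
  obtain ⟨K, hK, hKℓ⟩ := hcocompact
  obtain ⟨B, hB⟩ := h.exists_abs_le_of_subset_iUnion_zpow_image (ψ := fun p => (g p).1 - p.1)
    (by fun_prop) (fun p => by rw [hgh, hh, hh]; ring) hK
    (by simpa [h.zpow_apply_eq_of_translation hh] using hKℓ)
  obtain ⟨n, hn⟩ := exists_nat_gt (C + B + (g (γ s)).1 - (γ s).1)
  have hfg : (f ^ n) (g (γ s)) = (h ^ n) (g ((f ^ n) (γ s))) := DFunLike.congr_fun
    (pow_mul_eq_pow_mul_mul_pow (Homeomorph.ext hfh) (Homeomorph.ext hcomm) n) (γ s)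
  have hC' := hC (F ^ n) (hFH.pow_left n) s t
  rw [Homeomorph.apply_pow_apply_of_semiconj hF, Homeomorph.apply_pow_apply_of_semiconj hF, ht,
    hfg, ← zpow_natCast, h.zpow_apply_eq_of_translation hh, Int.cast_natCast] at hC'
  dsimp only at hC'
  have hB' := hB _ ⟨(F ^ n) s, Homeomorph.apply_pow_apply_of_semiconj hF n s⟩
  set y := (f ^ n) (γ s)
  linarith [neg_abs_le ((g y).1 - y.1), le_abs_self ((g y).1 + n - y.1 - ((g (γ s)).1 - (γ s).1))]
end

section
/- Define f(x,y) = (x + y, y + l(y)) with l(y) = (sin(π(2y + 1/2)) + 1)/8, and g(x,y) = (x, y+1), h(x,y) = (x+1, y) on ℝ². Then [f,g] = h, f and g each commute with h, f maps the x-axis strictly above itself (the second coordinate of f(x,0) is l(0) = 1/4 > 0), yet for every n ≥ 0 and every point p on the x-axis, the second coordinate of fⁿ(p) is bounded above by 1/2. -/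
open Real

/-- The bump function `l(y) = (sin(π(2y + 1/2)) + 1)/8`. -/
noncomputable def bumpL (y : ℝ) : ℝ := (Real.sin (π * (2 * y + 1 / 2)) + 1) / 8

/-- `f(x,y) = (x + y, y + l(y))`. -/
noncomputable def exF (p : ℝ × ℝ) : ℝ × ℝ := (p.1 + p.2, p.2 + bumpL p.2)

/-- `g(x,y) = (x, y + 1)`. -/
def exG (p : ℝ × ℝ) : ℝ × ℝ := (p.1, p.2 + 1)

/-- `h(x,y) = (x + 1, y)`. -/
def exH (p : ℝ × ℝ) : ℝ × ℝ := (p.1 + 1, p.2)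

/-!
The height of `f(x, y)` depends only on `y`, through `φ(y) = y + l(y)`. Since `l` is
`π/4`-Lipschitz, hence `1`-Lipschitz, and vanishes at `1/2`, the map `φ` sends `(-∞, 1/2]`
into itself, so no iterate of `f` lifts the `x`-axis above `y = 1/2`. The commutation
relations are direct computations, the one involving `g` using that `l` has period `1`.
-/

open Function Set

lemma bumpL_eq_cos (y : ℝ) : bumpL y = (cos (2 * π * y) + 1) / 8 := by
  rw [bumpL, show π * (2 * y + 1 / 2) = 2 * π * y + π / 2 by ring, sin_add_pi_div_two]

lemma bumpL_periodic : Periodic bumpL 1 := fun y => by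
  rw [bumpL_eq_cos, bumpL_eq_cos, mul_add, mul_one, cos_add_two_pi]

lemma bumpL_zero : bumpL 0 = 1 / 4 := by
  norm_num [bumpL_eq_cos]

lemma bumpL_one_half : bumpL (1 / 2) = 0 := by
  rw [bumpL_eq_cos, show 2 * π * (1 / 2) = π by ring, cos_pi]
  norm_num

lemma lipschitzWith_bumpL : LipschitzWith 1 bumpL := by
  refine LipschitzWith.of_dist_le_mul fun x y => ?_
  have hcos := abs_cos_sub_cos_le (2 * π * x) (2 * π * y)
  rw [← mul_sub, abs_mul, abs_of_pos (by positivity : 0 < 2 * π)] at hcos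
  have hdist : |x - y| * (2 * π) ≤ |x - y| * 8 := by
    gcongr
    linarith [pi_lt_d2]
  rw [Real.dist_eq, Real.dist_eq, bumpL_eq_cos, bumpL_eq_cos, NNReal.coe_one, one_mul,
    ← sub_div, add_sub_add_right_eq_sub, abs_div, abs_of_pos (by norm_num : (0 : ℝ) < 8),
    div_le_iff₀ (by norm_num)]
  linarith

lemma mapsTo_add_Iic_of_lipschitzWith_one {l : ℝ → ℝ} {c : ℝ} (hl : LipschitzWith 1 l)
    (hc : l c = 0) : MapsTo (fun y => y + l y) (Iic c) (Iic c) := fun y (hy : y ≤ c) => by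
  have hdist := hl.dist_le_mul y c
  rw [Real.dist_eq, Real.dist_eq, hc, sub_zero, NNReal.coe_one, one_mul,
    abs_of_nonpos (sub_nonpos.mpr hy)] at hdist
  show y + l y ≤ c
  linarith [le_abs_self (l y)]

lemma exF_exG (p : ℝ × ℝ) : exF (exG p) = exH (exG (exF p)) := by
  simp only [exF, exG, exH, bumpL_periodic p.2]
  exact Prod.ext (by ring) (by ring)

lemma exF_exH (p : ℝ × ℝ) : exF (exH p) = exH (exF p) :=
  Prod.ext (add_right_comm _ _ _) rfl

lemma semiconj_snd_exF : Semiconj Prod.snd exF (fun y => y + bumpL y) := fun _ => rfl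

/-- For `f(x,y) = (x+y, y+l(y))` with
`l(y) = (sin(π(2y+1/2))+1)/8`, `g(x,y) = (x,y+1)`, `h(x,y) = (x+1,y)`:
the commutator relation `f ∘ g = h ∘ g ∘ f` holds (i.e. `[f,g] = h`), `f` and
`g` each commute with `h`, `f` moves the `x`-axis strictly above itself (the
second coordinate of `f(x,0)` is `l(0) = 1/4 > 0`), yet all forward iterates of
the `x`-axis under `f` stay below the line `y = 1/2`. -/
theorem bounded_images_example :
    (∀ p, exF (exG p) = exH (exG (exF p))) ∧
    (∀ p, exF (exH p) = exH (exF p)) ∧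
    (∀ p, exG (exH p) = exH (exG p)) ∧
    (∀ x : ℝ, (exF (x, 0)).2 = 1 / 4) ∧
    (0 : ℝ) < 1 / 4 ∧
    (∀ (n : ℕ) (p : ℝ × ℝ), p.2 = 0 → (exF^[n] p).2 ≤ 1 / 2) := by
  refine ⟨exF_exG, exF_exH, fun _ => rfl, fun _ => ?_, by norm_num, fun n p hp => ?_⟩
  · rw [exF, zero_add, bumpL_zero]
  · have hmaps :=
      (mapsTo_add_Iic_of_lipschitzWith_one lipschitzWith_bumpL bumpL_one_half).iterate n
    rw [semiconj_snd_exF.iterate_right n p]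
    exact hmaps (hp.le.trans (by norm_num))
end

section
/- Two commuting orientation-preserving homeomorphisms f, g of the circle ℝ/ℤ admit commuting lifts to ℝ: there exist lifts F of f and G of g with F∘G = G∘F. -/
/-! The given lifts `F₀`, `G₀` already commute. Both `F₀ ∘ G₀` and `G₀ ∘ F₀` lift
`f ∘ g = g ∘ f`, so they differ by an integer, which is constant by continuity:
`F₀ ∘ G₀ = (· + m) ∘ G₀ ∘ F₀`. Translation by `m` commutes with every degree-one lift, so
translation numbers give `τ (F₀ G₀) = m + τ (G₀ F₀)`, while `τ (F₀ G₀) = τ (G₀ F₀)` because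
`F₀` semiconjugates `G₀ F₀` to `F₀ G₀`. Hence `m = 0`. -/

theorem AddCircle.comp_sub_comp_mem_zmultiples_of_commute {p : ℝ}
    {f g : AddCircle p → AddCircle p} {F G : ℝ → ℝ} (hfg : ∀ x, f (g x) = g (f x))
    (hF : ∀ x : ℝ, f x = F x) (hG : ∀ x : ℝ, g x = G x) (x : ℝ) :
    F (G x) - G (F x) ∈ AddSubgroup.zmultiples p :=
  QuotientAddGroup.eq_iff_sub_mem.mp <| by
    change ((F (G x) : ℝ) : AddCircle p) = (G (F x) : ℝ)
    rw [← hF, ← hG, ← hG, ← hF, hfg]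

theorem Continuous.eq_of_forall_mem_zmultiples {X : Type*} [TopologicalSpace X]
    [PreconnectedSpace X] {h : X → ℝ} (hc : Continuous h) {a : ℝ}
    (hmem : ∀ x, h x ∈ AddSubgroup.zmultiples a) (x y : X) : h x = h y :=
  isPreconnected_univ.constant_of_mapsTo
    (isDiscrete_iff_discreteTopology.mpr
      (inferInstanceAs (DiscreteTopology (AddSubgroup.zmultiples a)))) hc.continuousOn
    (fun x _ ↦ hmem x) trivial trivial

namespace CircleDeg1Lift

theorem translationNumber_mul_comm (f g : CircleDeg1Lift) :
    translationNumber (f * g) = translationNumber (g * f) :=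
  (translationNumber_eq_of_semiconj (f := f) (g₁ := g * f) (g₂ := f * g) fun _ ↦ rfl).symm

theorem commute_of_apply_apply_eq_add_int {f g : CircleDeg1Lift} {m : ℤ}
    (h : ∀ x, f (g x) = g (f x) + m) : Commute f g := by
  let T : CircleDeg1Lift := translate (Multiplicative.ofAdd (m : ℝ))
  have hT : f * g = T * (g * f) := by
    ext x
    simp only [mul_apply, h, T, translate_apply, add_comm]
  have hTcomm : Commute T (g * f) := by
    ext x
    simp only [mul_apply, T, translate_apply, map_int_add]
  have hm : (m : ℝ) = 0 := by
    have := translationNumber_mul_of_commute hTcomm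
    rw [← hT, translationNumber_mul_comm, translationNumber_translate] at this
    linarith
  ext x
  simp [h, hm]

end CircleDeg1Lift

/-- Two commuting orientation-preserving homeomorphisms `f, g` of
the circle `ℝ/ℤ` admit commuting lifts to `ℝ`. Orientation preservation is
expressed by the existence of (strictly) increasing lifts. -/
theorem commuting_circle_homeos_have_commuting_lifts
    (f g : AddCircle (1 : ℝ) ≃ₜ AddCircle (1 : ℝ))
    (hfg : ∀ x, f (g x) = g (f x))
    (F₀ G₀ : ℝ → ℝ)
    (hF₀c : Continuous F₀) (hF₀m : StrictMono F₀) (hF₀s : Function.Surjective F₀)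
    (hF₀per : ∀ x : ℝ, F₀ (x + 1) = F₀ x + 1)
    (hF₀lift : ∀ x : ℝ, f (x : AddCircle (1 : ℝ)) = ((F₀ x : ℝ) : AddCircle (1 : ℝ)))
    (hG₀c : Continuous G₀) (hG₀m : StrictMono G₀) (hG₀s : Function.Surjective G₀)
    (hG₀per : ∀ x : ℝ, G₀ (x + 1) = G₀ x + 1)
    (hG₀lift : ∀ x : ℝ, g (x : AddCircle (1 : ℝ)) = ((G₀ x : ℝ) : AddCircle (1 : ℝ))) :
    ∃ F G : ℝ → ℝ,
      Continuous F ∧ StrictMono F ∧ Function.Surjective F ∧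
      (∀ x : ℝ, F (x + 1) = F x + 1) ∧
      (∀ x : ℝ, f (x : AddCircle (1 : ℝ)) = ((F x : ℝ) : AddCircle (1 : ℝ))) ∧
      Continuous G ∧ StrictMono G ∧ Function.Surjective G ∧
      (∀ x : ℝ, G (x + 1) = G x + 1) ∧
      (∀ x : ℝ, g (x : AddCircle (1 : ℝ)) = ((G x : ℝ) : AddCircle (1 : ℝ))) ∧
      F ∘ G = G ∘ F := by
  refine ⟨F₀, G₀, hF₀c, hF₀m, hF₀s, hF₀per, hF₀lift, hG₀c, hG₀m, hG₀s, hG₀per, hG₀lift, ?_⟩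
  have hmem := AddCircle.comp_sub_comp_mem_zmultiples_of_commute hfg hF₀lift hG₀lift
  obtain ⟨m, hm⟩ := AddSubgroup.mem_zmultiples_iff.mp (hmem 0)
  have hconst : ∀ x, F₀ (G₀ x) = G₀ (F₀ x) + m := fun x ↦ by
    have := ((hF₀c.comp hG₀c).sub (hG₀c.comp hF₀c)).eq_of_forall_mem_zmultiples hmem x 0
    simp only [Pi.sub_apply, Function.comp_apply] at this
    rw [← hm, zsmul_one] at this
    linarith
  let F : CircleDeg1Lift := ⟨⟨F₀, hF₀m.monotone⟩, hF₀per⟩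
  let G : CircleDeg1Lift := ⟨⟨G₀, hG₀m.monotone⟩, hG₀per⟩
  exact (CircleDeg1Lift.commute_iff_commute.mp
    (CircleDeg1Lift.commute_of_apply_apply_eq_add_int (f := F) (g := G) hconst)).comp_eq
end
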